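/- arXiv:0709.0981 — 6 statements merged into one kernel-verified Lean document; each statement's English description precedes it below -/
import Mathlib

section
/- Let n ≥ 2, let ν(t) = (1, t, …, tⁿ) ∈ ℂ^(n+1) and ν'(t) = (0, 1, 2t, …, n tⁿ⁻¹). Fix p ∈ ℂ and let x = ν(p) + c·ν'(p) with c ≠ 0. Then x cannot be written as a linear combination of fewer than n vectors of the form ν(t₁), …, ν(t_r) with r < n. -/
open Polynomial Finset

/-- A point `x = ν(p) + c·ν'(p)` with `c ≠ 0` on the tangent line to the moment
curve is not a linear combination of fewer than `n` points of the curve. -/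
theorem tangent_point_rank_ge (n : ℕ) (hn : 2 ≤ n) (p c : ℂ) (hc : c ≠ 0)
    (ν : ℂ → Fin (n + 1) → ℂ) (hν : ∀ u j, ν u j = u ^ (j : ℕ))
    (ν' : ℂ → Fin (n + 1) → ℂ) (hν' : ∀ u j, ν' u j = (j : ℕ) * u ^ ((j : ℕ) - 1))
    (x : Fin (n + 1) → ℂ) (hx : x = ν p + c • ν' p) :
    ¬ ∃ r : ℕ, r < n ∧ ∃ (t : Fin r → ℂ) (a : Fin r → ℂ), x = ∑ i, a i • ν (t i) := by
  rintro ⟨r, hr, t, a, hxa⟩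
  classical
  set g : Polynomial ℂ := ∏ i : Fin r, (if t i = p then 1 else X - C (t i)) with hg
  set q : Polynomial ℂ := (X - C p) * g with hq
  -- degree bound
  have hdegg : g.natDegree ≤ r := by
    refine le_trans (Polynomial.natDegree_prod_le _ _) ?_
    calc ∑ i : Fin r, (if t i = p then (1 : ℂ[X]) else X - C (t i)).natDegree
        ≤ ∑ _i : Fin r, 1 := by
          refine Finset.sum_le_sum fun i _ => ?_
          split
          · simp
          · simp [Polynomial.natDegree_X_sub_C]
      _ = r := by simp
  have hdeg : q.natDegree < n + 1 := by
    have h := Polynomial.natDegree_mul_le (p := (X - C p : ℂ[X])) (q := g)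
    rw [Polynomial.natDegree_X_sub_C] at h
    have hq' : q.natDegree ≤ 1 + g.natDegree := hq ▸ h
    omega
  -- evaluation identity for the curve points
  have heval : ∀ u : ℂ, ∑ j : Fin (n+1), q.coeff j * u ^ (j : ℕ) = q.eval u := by
    intro u
    rw [Fin.sum_univ_eq_sum_range fun j => q.coeff j * u ^ j]
    exact (Polynomial.eval_eq_sum_range' hdeg u).symm
  -- derivative identity
  have hderiv : ∑ j : Fin (n+1), q.coeff j * ((j : ℕ) * p ^ ((j : ℕ) - 1))
      = (derivative q).eval p := by
    have hd : (derivative q).natDegree < n := by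
      have := Polynomial.natDegree_derivative_le q
      omega
    rw [Fin.sum_univ_eq_sum_range fun j => q.coeff j * ((j : ℕ) * p ^ (j - 1))]
    rw [Polynomial.eval_eq_sum_range' hd p]
    rw [Finset.sum_range_succ' (fun j => q.coeff j * ((j : ℕ) * p ^ (j - 1))) n]
    simp [Polynomial.coeff_derivative]
    ring_nf
    refine Finset.sum_congr rfl fun i _ => ?_
    ring
  -- q vanishes at the t i
  have hqt : ∀ i : Fin r, q.eval (t i) = 0 := by
    intro i
    by_cases h : t i = p
    · simp [hq, h]
    · rw [hq, Polynomial.eval_mul, hg, Polynomial.eval_prod]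
      have : Polynomial.eval (t i) (if t i = p then 1 else X - C (t i)) = 0 := by
        simp [h]
      rw [Finset.prod_eq_zero (Finset.mem_univ i) this, mul_zero]
  have hqp : q.eval p = 0 := by simp [hq]
  -- derivative at p
  have hgp : g.eval p ≠ 0 := by
    rw [hg, Polynomial.eval_prod]
    refine Finset.prod_ne_zero_iff.2 fun i _ => ?_
    by_cases h : t i = p
    · simp [h]
    · simp [h, sub_ne_zero.2 (fun e => h e.symm)]
  have hderivp : (derivative q).eval p = g.eval p := by
    rw [hq, derivative_mul]
    simp
  -- compute the functional on x in two ways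
  have h1 : ∑ j : Fin (n+1), q.coeff j * x j = c * g.eval p := by
    calc ∑ j : Fin (n+1), q.coeff j * x j
        = ∑ j : Fin (n+1), (q.coeff j * p ^ (j:ℕ)
            + c * (q.coeff j * ((j:ℕ) * p ^ ((j:ℕ) - 1)))) := by
          refine Finset.sum_congr rfl fun j _ => ?_
          rw [hx]; simp [hν, hν']; ring
      _ = q.eval p + c * (derivative q).eval p := by
          rw [Finset.sum_add_distrib, ← Finset.mul_sum, heval, hderiv]
      _ = c * g.eval p := by rw [hqp, hderivp, zero_add]
  have h2 : ∑ j : Fin (n+1), q.coeff j * x j = 0 := by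
    calc ∑ j : Fin (n+1), q.coeff j * x j
        = ∑ j : Fin (n+1), ∑ i : Fin r, a i * (q.coeff j * (t i) ^ (j:ℕ)) := by
          refine Finset.sum_congr rfl fun j _ => ?_
          rw [hxa]
          simp only [Finset.sum_apply, Pi.smul_apply, smul_eq_mul, hν, Finset.mul_sum]
          exact Finset.sum_congr rfl fun i _ => by ring
      _ = ∑ i : Fin r, a i * q.eval (t i) := by
          rw [Finset.sum_comm]
          refine Finset.sum_congr rfl fun i _ => ?_
          rw [← Finset.mul_sum, heval]
      _ = 0 := by simp [hqt]
  rw [h2] at h1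
  exact (mul_ne_zero hc hgp) h1.symm
end

section
/- Let n ≥ 2, ν(t) = (1, t, …, tⁿ), ν'(t) = (0, 1, 2t, …, n tⁿ⁻¹), p ∈ ℂ, c ≠ 0, and x = ν(p) + c·ν'(p). Then the C-rank of [x] with respect to the rational normal curve equals exactly n, where the C-rank is the least r such that x is a linear combination of r vectors ν(t₁), …, ν(t_r). -/
/-!
Pair `y ∈ ℂⁿ⁺¹` with a polynomial `f` of degree `≤ n` by `∑ⱼ fⱼ yⱼ`. Then `ν t` pairs to `f t`
and `x` to `L f = f p + c f' p`, so `x = ∑ aᵢ ν(tᵢ)` says that `L = ∑ aᵢ evalₜᵢ` on polynomials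
of degree `≤ n`. With fewer than `n` nodes, `f = (X - p) ∏_{tᵢ ≠ p} (X - tᵢ)` vanishes at every
node while `L f = c ∏ (p - tᵢ) ≠ 0`. Conversely, for distinct `uᵢ ≠ p` the functional `L` kills
`∏ (X - uᵢ)` iff `∑ (p - uᵢ)⁻¹ = -c⁻¹`, and then Lagrange interpolation at the `uᵢ` writes `L`
as a combination of the `n` evaluations `evalᵤᵢ`.
-/

open Polynomial Finset

theorem Polynomial.linearMap_apply_eq_of_X_pow {R M : Type*} [CommSemiring R] [AddCommMonoid M]
    [Module R M] {L L' : R[X] →ₗ[R] M} {n : ℕ} (h : ∀ j ≤ n, L (X ^ j) = L' (X ^ j))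
    {f : R[X]} (hf : f.natDegree ≤ n) : L f = L' f := by
  classical
  refine LinearMap.eqOn_span (s := (range (n + 1)).image fun j => (X : R[X]) ^ j) ?_ ?_
  · simp only [coe_image, coe_range, Set.EqOn, Set.mem_image, Set.mem_Iio]
    rintro _ ⟨j, hj, rfl⟩
    exact h j (Nat.lt_succ_iff.mp hj)
  · rw [← degreeLE_eq_span_X_pow, mem_degreeLE]
    exact degree_le_of_natDegree_le hf

theorem Polynomial.moments_eq_sum_smul_iff {R ι : Type*} [CommRing R] [Fintype ι]
    (L : R[X] →ₗ[R] R) (n : ℕ) (t a : ι → R) :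
    (fun j : Fin (n + 1) => L (X ^ (j : ℕ))) = ∑ i, a i • (fun j : Fin (n + 1) => t i ^ (j : ℕ)) ↔
      ∀ f : R[X], f.natDegree ≤ n → L f = ∑ i, a i * f.eval (t i) := by
  have hsum (f : R[X]) : ∑ i, a i * f.eval (t i) = (∑ i, a i • leval (t i)) f := by
    simp [LinearMap.sum_apply]
  constructor
  · intro h f hf
    rw [hsum]
    refine linearMap_apply_eq_of_X_pow (fun j hj => ?_) hf
    rw [← hsum]
    simpa using congrFun h ⟨j, Nat.lt_succ_of_le hj⟩
  · intro h
    ext j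
    simpa using h (X ^ (j : ℕ)) ((natDegree_X_pow_le _).trans (Nat.lt_succ_iff.mp j.isLt))

namespace Lagrange

variable {F ι : Type*} [Field F] [DecidableEq ι] {s : Finset ι} {v : ι → F}

theorem exists_eq_interpolate_add_C_mul_nodal (hvs : Set.InjOn v s) {f : F[X]}
    (hf : f.natDegree ≤ #s) :
    ∃ a : F, f = interpolate s v (fun i => f.eval (v i)) + C a * nodal s v := by
  have hmonic : (nodal s v).Monic := nodal_monic
  have hmod : f %ₘ nodal s v = interpolate s v (fun i => f.eval (v i)) := by
    refine eq_interpolate_of_eval_eq _ hvs ?_ fun i hi => ?_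
    · rw [← degree_nodal (v := v)]
      exact degree_modByMonic_lt f hmonic
    · rw [modByMonic_eq_sub_mul_div, eval_sub, eval_mul, eval_nodal_at_node hi, zero_mul,
        sub_zero]
  have hdiv : (f /ₘ nodal s v).natDegree = 0 := by
    rw [natDegree_divByMonic f hmonic, natDegree_nodal]
    omega
  refine ⟨(f /ₘ nodal s v).coeff 0, ?_⟩
  rw [← hmod, ← eq_C_of_natDegree_eq_zero hdiv, mul_comm]
  exact (modByMonic_add_div f (nodal s v)).symm

theorem linearMap_eq_sum_of_apply_nodal_eq_zero {M : Type*} [AddCommGroup M] [Module F M]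
    (hvs : Set.InjOn v s) {L : F[X] →ₗ[F] M} (hL : L (nodal s v) = 0) {f : F[X]}
    (hf : f.natDegree ≤ #s) :
    L f = ∑ i ∈ s, f.eval (v i) • L (Lagrange.basis s v i) := by
  obtain ⟨a, ha⟩ := exists_eq_interpolate_add_C_mul_nodal hvs hf
  conv_lhs => rw [ha]
  rw [map_add, ← smul_eq_C_mul, map_smul, hL, smul_zero, add_zero, interpolate_apply, map_sum]
  simp only [← smul_eq_C_mul, map_smul]

end Lagrange

theorem Fin.sum_univ_cast_add_one {K : Type*} [Field K] [CharZero K] (n : ℕ) :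
    ∑ i : Fin n, ((i : K) + 1) = n * (n + 1) / 2 := by
  induction n with
  | zero => simp
  | succ n ih =>
    simp only [Fin.sum_univ_castSucc, Fin.val_castSucc, Fin.val_last, ih]
    push_cast
    ring

section TangentEval

variable {K : Type*} [Field K]

/-- The values of this functional on `X ^ j` are the coordinates of `ν p + c • ν' p`. -/
noncomputable def tangentEval (p c : K) : K[X] →ₗ[K] K :=
  leval p + c • (leval p ∘ₗ (derivative : K[X] →ₗ[K] K[X]))

@[simp]
theorem tangentEval_apply (p c : K) (f : K[X]) :
    tangentEval p c f = f.eval p + c * (derivative f).eval p :=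
  rfl

theorem tangentEval_X_pow (p c : K) (j : ℕ) :
    tangentEval p c (X ^ j) = p ^ j + c * (j * p ^ (j - 1)) := by
  simp [derivative_X_pow]

theorem tangentEval_X_sub_C_mul (p c : K) (q : K[X]) :
    tangentEval p c ((X - C p) * q) = c * q.eval p := by
  simp

theorem tangentEval_nodal {ι : Type*} (p c : K) (s : Finset ι) (v : ι → K)
    (hv : ∀ i ∈ s, v i ≠ p) :
    tangentEval p c (Lagrange.nodal s v) =
      (∏ i ∈ s, (p - v i)) * (1 + c * ∑ i ∈ s, (p - v i)⁻¹) := by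
  classical
  rw [tangentEval_apply, Lagrange.derivative_nodal, eval_finsetSum, Lagrange.eval_nodal, mul_add,
    mul_one, mul_left_comm]
  congr 2
  rw [mul_sum]
  refine Finset.sum_congr rfl fun i hi => ?_
  rw [Lagrange.eval_nodal, ← mul_prod_erase s (fun j => p - v j) hi]
  field_simp [sub_ne_zero.mpr (hv i hi).symm]

theorem exists_tangentEval_ne_sum_eval {r n : ℕ} (p : K) {c : K} (hc : c ≠ 0) (hrn : r < n)
    (t a : Fin r → K) :
    ∃ f : K[X], f.natDegree ≤ n ∧ tangentEval p c f ≠ ∑ i, a i * f.eval (t i) := by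
  classical
  set s := univ.filter fun i => t i ≠ p
  refine ⟨(X - C p) * Lagrange.nodal s t, ?_, ?_⟩
  · calc ((X - C p) * Lagrange.nodal s t).natDegree
        ≤ (X - C p).natDegree + (Lagrange.nodal s t).natDegree := natDegree_mul_le
      _ = 1 + #s := by rw [natDegree_X_sub_C, Lagrange.natDegree_nodal]
      _ ≤ n := by have := card_le_univ s; rw [Fintype.card_fin] at this; omega
  · have hvanish : ∀ i, ((X - C p) * Lagrange.nodal s t).eval (t i) = 0 := by
      intro i
      by_cases hi : t i = p
      · simp [hi]
      · rw [eval_mul, Lagrange.eval_nodal_at_node (by simpa [s] using hi), mul_zero]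
    simp only [hvanish, mul_zero, sum_const_zero, tangentEval_X_sub_C_mul, Lagrange.eval_nodal]
    refine mul_ne_zero hc (prod_ne_zero_iff.mpr fun i hi => sub_ne_zero.mpr ?_)
    exact (mem_filter.mp hi).2.symm

/-- Chosen so that the `(p - uᵢ)⁻¹ = -(i + 1) / (c n (n + 1) / 2)` add up to `-c⁻¹`. -/
noncomputable def tangentNodes (p c : K) (n : ℕ) (i : Fin n) : K :=
  p + c * (n * (n + 1) / 2) / (i + 1)

variable {p c : K} {n : ℕ}

theorem inv_sub_tangentNodes (i : Fin n) :
    (p - tangentNodes p c n i)⁻¹ = -((i : K) + 1) / (c * (n * (n + 1) / 2)) := by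
  rw [tangentNodes, sub_add_cancel_left, ← neg_div, inv_div, div_neg, neg_div]

theorem tangentNodes_injective [CharZero K] (hc : c ≠ 0) (hn : n ≠ 0) :
    Function.Injective (tangentNodes p c n) := by
  have hscale : c * (n * (n + 1) / 2) ≠ 0 := by simp [hc, hn, Nat.cast_add_one_ne_zero]
  intro i j hij
  have := congrArg (fun u => (p - u)⁻¹) hij
  simp only [inv_sub_tangentNodes, div_left_inj' hscale, neg_inj] at this
  exact Fin.ext (by exact_mod_cast add_right_cancel this)

theorem tangentNodes_ne [CharZero K] (hc : c ≠ 0) (hn : n ≠ 0) (i : Fin n) :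
    tangentNodes p c n i ≠ p := by
  simp [tangentNodes, hc, hn, Nat.cast_add_one_ne_zero]

theorem tangentEval_nodal_tangentNodes [CharZero K] (hc : c ≠ 0) (hn : n ≠ 0) :
    tangentEval p c (Lagrange.nodal univ (tangentNodes p c n)) = 0 := by
  rw [tangentEval_nodal p c _ _ fun i _ => tangentNodes_ne hc hn i]
  simp only [inv_sub_tangentNodes, ← sum_div, sum_neg_distrib, Fin.sum_univ_cast_add_one]
  field_simp [hc, hn, Nat.cast_add_one_ne_zero]
  ring

theorem exists_tangentEval_eq_sum_eval [CharZero K] (hc : c ≠ 0) (hn : n ≠ 0) :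
    ∃ t a : Fin n → K, ∀ f : K[X], f.natDegree ≤ n →
      tangentEval p c f = ∑ i, a i * f.eval (t i) := by
  refine ⟨tangentNodes p c n,
    fun i => tangentEval p c (Lagrange.basis univ (tangentNodes p c n) i), fun f hf => ?_⟩
  rw [Lagrange.linearMap_eq_sum_of_apply_nodal_eq_zero (tangentNodes_injective hc hn).injOn
    (tangentEval_nodal_tangentNodes hc hn) (by rwa [card_univ, Fintype.card_fin])]
  simp only [smul_eq_mul, mul_comm]

end TangentEval

/-- The rank of a tangent-line point `x = ν(p) + c·ν'(p)` (with `c ≠ 0`) with respect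
to the moment curve is exactly `n`: `n` is the least `r` such that `x` is a linear
combination of `r` points of the curve. -/
theorem tangent_point_rank_eq (n : ℕ) (hn : 2 ≤ n) (p c : ℂ) (hc : c ≠ 0)
    (ν : ℂ → Fin (n + 1) → ℂ) (hν : ∀ u j, ν u j = u ^ (j : ℕ))
    (ν' : ℂ → Fin (n + 1) → ℂ) (hν' : ∀ u j, ν' u j = (j : ℕ) * u ^ ((j : ℕ) - 1))
    (x : Fin (n + 1) → ℂ) (hx : x = ν p + c • ν' p) :
    IsLeast {r : ℕ | ∃ (t : Fin r → ℂ) (a : Fin r → ℂ), x = ∑ i, a i • ν (t i)} n := by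
  have hx_moments : x = fun j : Fin (n + 1) => tangentEval p c (X ^ (j : ℕ)) := by
    ext j
    simp only [hx, Pi.add_apply, Pi.smul_apply, smul_eq_mul, hν, hν', tangentEval_X_pow]
  obtain rfl : ν = fun u (j : Fin (n + 1)) => u ^ (j : ℕ) := funext fun u => funext (hν u)
  simp only [hx_moments, moments_eq_sum_smul_iff]
  refine ⟨exists_tangentEval_eq_sum_eval hc (by omega), fun r ⟨t, a, hrep⟩ => ?_⟩
  by_contra! hrn
  obtain ⟨f, hf, hne⟩ := exists_tangentEval_ne_sum_eval p hc hrn t a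
  exact hne (hrep f hf)
end

section
/- Let f ∈ ℂ[x] be a polynomial with deg f = n ≥ 1. Then f can be written as a linear combination of at most n polynomials of the form (x − tᵢ)ⁿ with distinct tᵢ ∈ ℂ, and if moreover f = (x − p)^(n−1)·(x − q) with q ≠ p, then f cannot be written as a linear combination of fewer than n such powers. -/
/-!
The argument runs through the apolarity pairing `apolar n` of polynomials of degree `≤ n` (binary
forms of degree `n`, dehomogenized), normalized so that `apolar n P ((X - C t) ^ n) = P.eval t`.
Thus a combination of powers `(X - C tᵢ) ^ n` is apolar to every `P` vanishing at all `tᵢ`;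
conversely, if the `tᵢ` are `n` distinct roots of some `P ≠ 0` of degree `≤ n`, every `f`
apolar to `P` is such a combination, because adding one power `(X - C u) ^ n` with `P u ≠ 0`
gives a basis.

For existence take `b` with `f b ≠ 0`: then `(X - b) ^ n - a`, `a = (-1) ^ n f(b) / lc f ≠ 0`,
is apolar to `f`, and its roots `b + r ζ ^ i` (`r ^ n = a`, `ζ` a primitive `n`-th root of
unity) are distinct. For the lower bound, if `(X - p) ^ n (X - q)` were a combination of at most `n`
powers `(X - C tᵢ) ^ (n + 1)`, the polynomial `P` with simple roots at `p` and at the `tᵢ` would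
have degree `≤ n + 1` and so pair to zero with it, yet pairing `P` with the same polynomial
written as `(X - p) ^ (n + 1) + (p - q) (X - p) ^ n` gives `-(p - q) P'(p) / (n + 1) ≠ 0`.
-/

open Polynomial Finset

namespace Polynomial

variable {K : Type*} [Field K]

noncomputable def apolar (n : ℕ) : K[X] →ₗ[K] K[X] →ₗ[K] K :=
  ∑ j ∈ range (n + 1), ((-1) ^ j / (n.choose j : K)) •
    (LinearMap.mul K K).compl₁₂ (lcoeff K j) (lcoeff K (n - j))

lemma apolar_apply (n : ℕ) (P g : K[X]) :
    apolar n P g =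
      ∑ j ∈ range (n + 1), (-1) ^ j / (n.choose j : K) * (P.coeff j * g.coeff (n - j)) := by
  simp [apolar]

lemma apolar_comm (n : ℕ) (P g : K[X]) : apolar n P g = (-1) ^ n * apolar n g P := by
  rw [apolar_apply, apolar_apply, ← sum_range_reflect, mul_sum]
  refine sum_congr rfl fun j hj => ?_
  have hj : j ≤ n := Nat.lt_succ_iff.mp (mem_range.mp hj)
  have hsign : (-1 : K) ^ n = (-1) ^ j * (-1) ^ (n - j) := by
    rw [← pow_add, Nat.add_sub_cancel' hj]
  have hsq : ((-1 : K) ^ j) ^ 2 = 1 := by rw [pow_right_comm, neg_one_sq, one_pow]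
  rw [Nat.add_sub_cancel, Nat.sub_sub_self hj, Nat.choose_symm hj, hsign]
  linear_combination (-((-1) ^ (n - j) / (n.choose j : K) * (P.coeff (n - j) * g.coeff j))) * hsq

lemma apolar_C (n : ℕ) (a : K) (g : K[X]) : apolar n (C a) g = a * g.coeff n := by
  rw [apolar_apply, sum_eq_single 0] <;> simp +contextual [coeff_C]

lemma coeff_X_sub_C_pow (t : K) (n k : ℕ) :
    ((X - C t) ^ n).coeff k = (-t) ^ (n - k) * n.choose k := by
  rw [sub_eq_add_neg, ← C_neg, coeff_X_add_C_pow]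

variable [CharZero K]

lemma apolar_X_sub_C_pow {n : ℕ} {P : K[X]} (hP : P.natDegree ≤ n) (t : K) :
    apolar n P ((X - C t) ^ n) = P.eval t := by
  rw [apolar_apply, eval_eq_sum_range' (Nat.lt_succ_of_le hP)]
  refine sum_congr rfl fun j hj => ?_
  have hj : j ≤ n := Nat.lt_succ_iff.mp (mem_range.mp hj)
  have hc : (n.choose j : K) ≠ 0 := Nat.cast_ne_zero.mpr (Nat.choose_pos hj).ne'
  have hsq : ((-1 : K) ^ j) ^ 2 = 1 := by rw [pow_right_comm, neg_one_sq, one_pow]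
  rw [coeff_X_sub_C_pow, Nat.sub_sub_self hj, Nat.choose_symm hj, neg_pow t]
  field_simp
  linear_combination P.coeff j * t ^ j * hsq

lemma apolar_X_sub_C_pow_pred {n : ℕ} {P : K[X]} (hP : P.natDegree ≤ n + 1) (t : K) :
    apolar (n + 1) P ((X - C t) ^ n) = -P.derivative.eval t / (n + 1) := by
  have hD : P.derivative.eval t = ∑ j ∈ range (n + 1), P.coeff (j + 1) * (j + 1) * t ^ j := by
    rw [derivative_eval, sum_over_range' _ (by simp) (n + 2) (by omega), sum_range_succ']
    simp
  rw [apolar_apply, sum_range_succ', coeff_eq_zero_of_natDegree_lt (p := (X - C t) ^ n) (by simp),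
    hD, neg_div, sum_div, ← sum_neg_distrib, mul_zero, mul_zero, add_zero]
  refine sum_congr rfl fun j hj => ?_
  have hj : j ≤ n := Nat.lt_succ_iff.mp (mem_range.mp hj)
  have hc : ((n + 1).choose (j + 1) : K) ≠ 0 :=
    Nat.cast_ne_zero.mpr (Nat.choose_pos (by omega)).ne'
  have hratio : ((n + 1).choose (j + 1) * (j + 1) : K) = (n + 1) * n.choose j := by
    exact_mod_cast (Nat.add_one_mul_choose_eq n j).symm
  have hsq : ((-1 : K) ^ j) ^ 2 = 1 := by rw [pow_right_comm, neg_one_sq, one_pow]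
  rw [Nat.add_sub_add_right, coeff_X_sub_C_pow, Nat.sub_sub_self hj, Nat.choose_symm hj, neg_pow t]
  field_simp
  rw [pow_succ]
  linear_combination (-(P.coeff (j + 1) * t ^ j * n.choose j * (n + 1))) * hsq +
    P.coeff (j + 1) * t ^ j * hratio

lemma apolar_sum_smul_X_sub_C_pow {n : ℕ} {P : K[X]} (hP : P.natDegree ≤ n) {ι : Type*}
    (s : Finset ι) (c t : ι → K) :
    apolar n P (∑ i ∈ s, c i • (X - C (t i)) ^ n) = ∑ i ∈ s, c i * P.eval (t i) := by
  simp [apolar_X_sub_C_pow hP]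

lemma linearIndependent_X_sub_C_pow {m n : ℕ} (hm : m ≤ n + 1) {t : Fin m → K}
    (ht : Function.Injective t) : LinearIndependent K fun i => (X - C (t i)) ^ n := by
  rw [Fintype.linearIndependent_iff]
  intro c hc j
  set R := ∏ i ∈ univ.erase j, (X - C (t i))
  have hR : R.natDegree ≤ n := by
    rw [natDegree_prod_of_monic _ _ fun i _ => monic_X_sub_C (t i)]
    simp only [natDegree_X_sub_C, sum_const, smul_eq_mul, mul_one, card_erase_of_mem (mem_univ j),
      card_univ, Fintype.card_fin]
    omega
  have hRt : ∀ i, R.eval (t i) = 0 ↔ i ≠ j := by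
    intro i
    simp [R, eval_prod, prod_eq_zero_iff, sub_eq_zero, ht.eq_iff]
  have hcR := congrArg (apolar n R) hc
  rw [apolar_sum_smul_X_sub_C_pow hR, map_zero,
    sum_eq_single j (fun i _ hij => by simp [(hRt i).2 hij]) (by simp)] at hcR
  exact (mul_eq_zero.mp hcR).resolve_right (mt (hRt j).1 (not_not.2 rfl))

lemma span_X_sub_C_pow_eq_degreeLT {n : ℕ} {t : Fin (n + 1) → K} (ht : Function.Injective t) :
    Submodule.span K (Set.range fun i => (X - C (t i)) ^ n) = degreeLT K (n + 1) := by
  refine Submodule.eq_of_le_of_finrank_eq ?_ ?_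
  · rw [Submodule.span_le]
    rintro _ ⟨i, rfl⟩
    exact mem_degreeLT.2 ((degree_pow_le _ _).trans_lt
      (by rw [degree_X_sub_C, nsmul_one]; exact_mod_cast n.lt_succ_self))
  · rw [finrank_span_eq_card (linearIndependent_X_sub_C_pow le_rfl ht),
      Module.finrank_eq_card_basis (degreeLT.basis K (n + 1))]

lemma exists_eq_sum_smul_X_sub_C_pow_of_apolar_eq_zero {n : ℕ} {P : K[X]} (hP0 : P ≠ 0)
    (hP : P.natDegree ≤ n) {t : Fin n → K} (ht : Function.Injective t)
    (hPt : ∀ i, P.eval (t i) = 0) {f : K[X]} (hf : f.natDegree ≤ n) (hPf : apolar n P f = 0) :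
    ∃ c : Fin n → K, f = ∑ i, c i • (X - C (t i)) ^ n := by
  obtain ⟨u, hu⟩ := not_forall.1 (mt (zero_of_eval_zero P) hP0)
  have hut : Function.Injective (Fin.cons u t : Fin (n + 1) → K) :=
    Fin.cons_injective_iff.2 ⟨fun ⟨i, hi⟩ => hu (hi ▸ hPt i), ht⟩
  have hfmem : f ∈ degreeLT K (n + 1) :=
    mem_degreeLT.2 (degree_le_natDegree.trans_lt (by exact_mod_cast Nat.lt_succ_of_le hf))
  rw [← span_X_sub_C_pow_eq_degreeLT hut, Submodule.mem_span_range_iff_exists_fun] at hfmem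
  obtain ⟨c, hc⟩ := hfmem
  simp only [Fin.sum_univ_succ, Fin.cons_zero, Fin.cons_succ] at hc
  have hc0 : c 0 * P.eval u = 0 := by
    rw [← hc, map_add, map_smul, apolar_X_sub_C_pow hP, apolar_sum_smul_X_sub_C_pow hP] at hPf
    simpa [hPt] using hPf
  refine ⟨fun i => c i.succ, ?_⟩
  rw [← hc, (mul_eq_zero.1 hc0).resolve_right hu, zero_smul, zero_add]

theorem exists_waring_decomposition [IsAlgClosed K] {n : ℕ} (hn : n ≠ 0) {f : K[X]}
    (hf : f.natDegree = n) :
    ∃ t : Fin n → K, Function.Injective t ∧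
      ∃ c : Fin n → K, f = ∑ i, c i • (X - C (t i)) ^ n := by
  have hf0 : f ≠ 0 := by
    rintro rfl
    exact hn (hf ▸ natDegree_zero)
  obtain ⟨b, hb⟩ := not_forall.1 (mt (zero_of_eval_zero f) hf0)
  set a := (-1) ^ n * f.eval b / f.leadingCoeff
  have ha : a ≠ 0 := by simp [a, hb, hf0]
  obtain ⟨r, hr⟩ := IsAlgClosed.exists_pow_nat_eq a (Nat.pos_of_ne_zero hn)
  obtain ⟨ζ, hζ⟩ := IsAlgClosed.exists_root (cyclotomic n K)
    (degree_cyclotomic_pos n K (Nat.pos_of_ne_zero hn)).ne'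
  rw [isRoot_cyclotomic_iff_charZero (Nat.pos_of_ne_zero hn)] at hζ
  set P := (X - C b) ^ n - C a
  have hP : P.natDegree = n := by simp [P, natDegree_sub_C]
  refine ⟨fun i => b + r * ζ ^ (i : ℕ), ?inj,
    exists_eq_sum_smul_X_sub_C_pow_of_apolar_eq_zero (P := P) ?ne hP.le ?inj ?roots hf.le ?apolar⟩
  case inj =>
    intro i j hij
    have hr0 : r ≠ 0 := by rintro rfl; exact ha (hr ▸ zero_pow hn)
    exact Fin.ext (hζ.pow_inj i.2 j.2 (mul_left_cancel₀ hr0 (add_left_cancel hij)))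
  case ne => exact ne_zero_of_natDegree_gt (hP ▸ Nat.pos_of_ne_zero hn)
  case roots =>
    intro i
    simp only [P, eval_sub, eval_pow, eval_X, eval_C, add_sub_cancel_left, mul_pow, hr]
    rw [pow_right_comm, hζ.pow_eq_one, one_pow, mul_one, sub_self]
  case apolar =>
    rw [map_sub, LinearMap.sub_apply, apolar_comm, apolar_X_sub_C_pow hf.le, apolar_C, ← hf,
      ← leadingCoeff, div_mul_cancel₀ _ (leadingCoeff_ne_zero.2 hf0), hf, sub_self]

theorem X_sub_C_pow_mul_X_sub_C_ne_sum_smul_pow {n r : ℕ} (hr : r ≤ n) {p q : K} (hqp : q ≠ p)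
    (t c : Fin r → K) : (X - C p) ^ n * (X - C q) ≠ ∑ i, c i • (X - C (t i)) ^ (n + 1) := by
  classical
  intro h
  set R := ∏ s ∈ (univ.image t).erase p, (X - C s)
  have hRp : R.eval p ≠ 0 := by
    simp only [R, eval_prod, eval_sub, eval_X, eval_C, prod_ne_zero_iff, sub_ne_zero]
    exact fun s hs => (ne_of_mem_erase hs).symm
  have hR : R.natDegree ≤ n := by
    rw [natDegree_prod_of_monic _ _ fun s _ => monic_X_sub_C s]
    simp only [natDegree_X_sub_C, sum_const, smul_eq_mul, mul_one]
    exact (card_erase_le.trans card_image_le).trans (by simpa using hr)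
  set P := (X - C p) * R
  have hP : P.natDegree ≤ n + 1 :=
    natDegree_mul_le.trans (by rw [natDegree_X_sub_C]; omega)
  have hPt : ∀ i, P.eval (t i) = 0 := by
    intro i
    by_cases hi : t i = p
    · simp [P, hi]
    · simp [P, R, eval_prod, prod_eq_zero_iff, sub_eq_zero, hi]
  have hPf := congrArg (apolar (n + 1) P) h
  have hsplit : (X - C p) ^ n * (X - C q) = (X - C p) ^ (n + 1) + (p - q) • (X - C p) ^ n := by
    rw [smul_eq_C_mul, C_sub]
    ring
  have hP' : P.derivative.eval p = R.eval p := by simp [P, derivative_mul]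
  rw [apolar_sum_smul_X_sub_C_pow hP, hsplit, map_add, map_smul, apolar_X_sub_C_pow hP,
    apolar_X_sub_C_pow_pred hP, hP'] at hPf
  simp [P, hPt, sub_eq_zero, hqp.symm, hRp, Nat.cast_add_one_ne_zero] at hPf

end Polynomial

/-- Every polynomial of degree `n ≥ 1` is a linear combination of `n` powers
`(x - tᵢ)ⁿ` with distinct `tᵢ`; and if `f = (x-p)^(n-1)(x-q)` with `q ≠ p`,
then `f` is not a linear combination of fewer than `n` such powers. -/
theorem waring_polynomials (n : ℕ) (hn : 1 ≤ n) (f : ℂ[X]) (hf : f.natDegree = n) :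
    (∃ t : Fin n → ℂ, Function.Injective t ∧
        ∃ c : Fin n → ℂ, f = ∑ i, c i • (X - C (t i)) ^ n) ∧
      (∀ p q : ℂ, q ≠ p → f = (X - C p) ^ (n - 1) * (X - C q) →
        ¬ ∃ r : ℕ, r < n ∧ ∃ (t : Fin r → ℂ) (c : Fin r → ℂ),
            f = ∑ i, c i • (X - C (t i)) ^ n) := by
  refine ⟨exists_waring_decomposition (by omega) hf, ?_⟩
  rintro p q hqp rfl ⟨r, hr, t, c, h⟩
  obtain ⟨m, rfl⟩ : ∃ m, n = m + 1 := ⟨n - 1, by omega⟩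
  exact X_sub_C_pow_mul_X_sub_C_ne_sum_smul_pow (by omega) hqp t c h
end

section
/- Let ν(t) = (1, t, …, tⁿ) be the moment curve in ℂ^(n+1), n ≥ 2. For p ∈ ℂ let L = span{ν(p), ν'(p)}. If M = span{ν(t₁), …, ν(t_r)} with r ≤ n−1, the tᵢ pairwise distinct, and all tᵢ ≠ p, then L ∩ M ⊆ {0} or L ∩ M is one-dimensional and does not contain ν(p). -/
open Polynomial Finset
open Polynomial Finset

lemma deriv_sum_eq (n : ℕ) (hn : 1 ≤ n) (q : ℂ[X]) (hq : q.natDegree ≤ n) (p : ℂ) :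
    ∑ j ∈ range (n+1), q.coeff j * ((j : ℂ) * p ^ (j-1)) = q.derivative.eval p := by
  have hd : q.derivative.natDegree < n := by
    have := natDegree_derivative_le q; omega
  rw [Polynomial.eval_eq_sum_range' hd, Finset.sum_range_succ']
  simp only [Nat.cast_zero, zero_mul, mul_zero, add_zero, coeff_derivative,
    Nat.add_sub_cancel]
  refine Finset.sum_congr rfl fun j _ => ?_
  push_cast; ring

lemma key_lemma (n r : ℕ) (hn : 1 ≤ n) (a : Fin r → ℂ) (b c : ℂ) (t : Fin r → ℂ) (p : ℂ)
    (h : ∀ j : Fin (n+1), (∑ i, a i * t i ^ (j:ℕ)) + b * p ^ (j:ℕ)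
        + c * ((j:ℕ) * p ^ ((j:ℕ)-1)) = 0)
    (q : ℂ[X]) (hq : q.natDegree ≤ n) :
    (∑ i, a i * q.eval (t i)) + b * q.eval p + c * q.derivative.eval p = 0 := by
  have hA : ∀ u : ℂ, q.eval u = ∑ j ∈ range (n+1), q.coeff j * u ^ j :=
    fun u => Polynomial.eval_eq_sum_range' (by omega) u
  have hB := deriv_sum_eq n hn q hq p
  calc (∑ i, a i * q.eval (t i)) + b * q.eval p + c * q.derivative.eval p
      = ∑ j ∈ range (n+1), q.coeff j *
          ((∑ i, a i * t i ^ j) + b * p ^ j + c * ((j:ℂ) * p ^ (j-1))) := by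
        simp only [hA, ← hB, Finset.mul_sum, Finset.sum_mul, mul_add,
          Finset.sum_add_distrib]
        congr 1
        · congr 1
          · rw [Finset.sum_comm]
            exact Finset.sum_congr rfl fun j _ => Finset.sum_congr rfl fun i _ => by ring
          · exact Finset.sum_congr rfl fun j _ => by ring
        · exact Finset.sum_congr rfl fun j _ => by ring
    _ = 0 := by
        refine Finset.sum_eq_zero fun j hj => ?_
        rw [Finset.mem_range] at hj
        have := h ⟨j, hj⟩
        simp only [Fin.val_mk] at this
        rw [this, mul_zero]


/-- The (cone over the) tangent line `L = span{ν(p), ν'(p)}` to the moment curve meets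
the span `M` of `r ≤ n-1` points `ν(tᵢ)` (with the `tᵢ` pairwise distinct and all `≠ p`)
either trivially, or in a one-dimensional subspace not containing `ν(p)`. -/
theorem tangent_meets_secant_span (n : ℕ) (hn : 2 ≤ n) (p : ℂ) (r : ℕ) (hr : r ≤ n - 1)
    (t : Fin r → ℂ) (ht : Function.Injective t) (htp : ∀ i, t i ≠ p)
    (ν : ℂ → Fin (n + 1) → ℂ) (hν : ∀ u j, ν u j = u ^ (j : ℕ))
    (ν' : ℂ → Fin (n + 1) → ℂ) (hν' : ∀ u j, ν' u j = (j : ℕ) * u ^ ((j : ℕ) - 1))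
    (L M : Submodule ℂ (Fin (n + 1) → ℂ))
    (hL : L = Submodule.span ℂ {ν p, ν' p})
    (hM : M = Submodule.span ℂ (Set.range fun i => ν (t i))) :
    L ⊓ M = ⊥ ∨ (Module.finrank ℂ ↥(L ⊓ M) = 1 ∧ ν p ∉ L ⊓ M) := by
  left
  -- the combined family is linearly independent
  have hLI : LinearIndependent ℂ (Sum.elim (fun i => ν (t i)) ![ν p, ν' p]) := by
    rw [Fintype.linearIndependent_iff]
    intro g hg
    set a : Fin r → ℂ := fun i => g (Sum.inl i) with ha
    set b : ℂ := g (Sum.inr 0) with hb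
    set c : ℂ := g (Sum.inr 1) with hc
    -- pointwise equation
    have h0 : ∀ j : Fin (n+1), (∑ i, a i * t i ^ (j:ℕ)) + b * p ^ (j:ℕ)
        + c * ((j:ℕ) * p ^ ((j:ℕ)-1)) = 0 := by
      intro j
      have := congrFun hg j
      simp only [Finset.sum_apply, Pi.smul_apply, Pi.zero_apply, smul_eq_mul,
        Fintype.sum_sum_type, Fin.sum_univ_two, Sum.elim_inl, Sum.elim_inr,
        Matrix.cons_val_zero, Matrix.cons_val_one, Matrix.head_cons, hν, hν'] at this
      rw [ha, hb, hc]
      simp only []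
      linear_combination this
    have hkey := fun q hq => key_lemma n r (by omega) a b c t p h0 q hq
    -- kill each a k
    have haz : ∀ k, a k = 0 := by
      intro k
      have hrpos : 0 < r := k.pos
      set q : ℂ[X] := (∏ i ∈ Finset.univ.erase k, (X - C (t i))) * (X - C p)^2 with hq
      have hdeg : q.natDegree ≤ n := by
        refine le_trans (natDegree_mul_le) ?_
        have h1 : (∏ i ∈ Finset.univ.erase k, (X - C (t i))).natDegree ≤ r - 1 := by
          refine le_trans (natDegree_prod_le _ _) ?_
          have hcard : (Finset.univ.erase k).card = r - 1 := by
            rw [Finset.card_erase_of_mem (Finset.mem_univ k)]; simp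
          have hle : ∑ i ∈ Finset.univ.erase k, (X - C (t i)).natDegree
              ≤ ∑ _i ∈ Finset.univ.erase k, 1 := by
            apply Finset.sum_le_sum
            intro i _
            exact natDegree_X_sub_C_le (t i)
          refine le_trans hle ?_
          rw [Finset.sum_const, hcard, smul_eq_mul, mul_one]
        have h2 : ((X - C p)^2).natDegree ≤ 2 := by
          refine le_trans (natDegree_pow_le) ?_
          have := natDegree_X_sub_C_le (R := ℂ) p; omega
        calc (∏ i ∈ Finset.univ.erase k, (X - C (t i))).natDegree
            + ((X - C p)^2).natDegree ≤ (r - 1) + 2 := add_le_add h1 h2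
          _ ≤ n := by omega
      have hevp : q.eval p = 0 := by simp [hq]
      have hdevp : q.derivative.eval p = 0 := by
        rw [hq, derivative_mul]
        simp [derivative_pow]
      have heval : ∀ i, i ≠ k → q.eval (t i) = 0 := by
        intro i hik
        rw [hq]
        simp only [eval_mul, eval_prod, eval_sub, eval_X, eval_C]
        apply mul_eq_zero_of_left
        exact Finset.prod_eq_zero (Finset.mem_erase.mpr ⟨hik, Finset.mem_univ i⟩)
          (by simp)
      have hevk : q.eval (t k) ≠ 0 := by
        rw [hq]
        simp only [eval_mul, eval_prod, eval_sub, eval_X, eval_C, eval_pow]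
        apply mul_ne_zero
        · refine Finset.prod_ne_zero_iff.mpr fun i hi => ?_
          rw [Finset.mem_erase] at hi
          exact sub_ne_zero_of_ne fun h => hi.1 (ht h).symm
        · exact pow_ne_zero _ (sub_ne_zero_of_ne (htp k))
      have := hkey q hdeg
      rw [hevp, hdevp, mul_zero, mul_zero, add_zero, add_zero] at this
      rw [Finset.sum_eq_single k (fun i _ hik => by rw [heval i hik, mul_zero])
        (fun h => absurd (Finset.mem_univ k) h)] at this
      exact (mul_eq_zero.mp this).resolve_right hevk
    -- now b = c = 0
    have hb0 : b = 0 := by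
      have := h0 0
      simp [haz] at this
      convert this using 2
    have hc0 : c = 0 := by
      have := h0 1
      have h1 : ((1 : Fin (n+1)) : ℕ) = 1 := by
        rw [Fin.val_one']
        exact Nat.mod_eq_of_lt (by omega)
      rw [h1] at this
      simp [haz, hb0] at this
      exact this
    intro i
    rcases i with i | i
    · exact haz i
    · fin_cases i
      · exact hb0
      · exact hc0
  rcases linearIndependent_sum.mp hLI with ⟨-, -, hdisj⟩
  have hrange : Set.range ![ν p, ν' p] = {ν p, ν' p} := by
    rw [show ((![ν p, ν' p] : Fin 2 → _)) = fun i => ![ν p, ν' p] i from rfl]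
    simp [Matrix.range_cons, Matrix.range_empty]
    exact Set.pair_comm _ _
  rw [hL, hM, ← hrange]
  exact disjoint_iff.mp hdisj.symm
end

section
/- Let n ≥ 1 and let f ∈ ℂ[x] be nonzero of degree ≤ n. Unless f has degree exactly n with a root of multiplicity n (in which case f is itself proportional to an n-th power of a linear form and has rank 1), there exist pairwise distinct t₁, …, t_n ∈ ℂ and coefficients c₁, …, c_n ∈ ℂ such that f(x) = Σᵢ cᵢ (1 + tᵢ x)ⁿ. -/
open Polynomial

section AuxWaring
open Finset

lemma coeff_one_add_C_mul_X_pow (s : ℂ) (n k : ℕ) :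
    ((1 + C s * X) ^ n).coeff k = (n.choose k : ℂ) * s ^ k := by
  rw [add_comm (1 : ℂ[X]), add_pow]
  simp only [one_pow, mul_one, mul_pow, ← C_pow, ← C_eq_natCast,
    finset_sum_coeff, coeff_mul_C, coeff_C_mul, coeff_X_pow, mul_ite, ite_mul, mul_one, mul_zero,
    zero_mul]
  rw [Finset.sum_ite_eq (Finset.range (n+1)) k]
  by_cases h : k ∈ Finset.range (n+1)
  · simp [h, mul_comm]
  · simp only [h, if_false]
    rw [Nat.choose_eq_zero_of_lt (by simpa [Nat.lt_succ_iff] using h), Nat.cast_zero, zero_mul]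

lemma lambda_eval (n : ℕ) (H : ℂ[X]) (hH : H.natDegree ≤ n) (s : ℂ) :
    ∑ k ∈ Finset.range (n+1),
      ((k.factorial : ℂ) * ((n-k).factorial : ℂ)) * ((1 + C s * X) ^ n).coeff k * H.coeff k
      = (n.factorial : ℂ) * H.eval s := by
  rw [eval_eq_sum_range' (Nat.lt_succ_of_le hH), Finset.mul_sum]
  refine Finset.sum_congr rfl fun k hk => ?_
  rw [coeff_one_add_C_mul_X_pow]
  have hkn : k ≤ n := Nat.lt_succ_iff.mp (Finset.mem_range.mp hk)
  have : (k.factorial : ℂ) * ((n-k).factorial : ℂ) * (n.choose k : ℂ) = (n.factorial : ℂ) := by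
    rw [← Nat.cast_mul, ← Nat.cast_mul, ← Nat.choose_mul_factorial_mul_factorial hkn]
    push_cast; ring
  calc (k.factorial : ℂ) * ((n-k).factorial : ℂ) * ((n.choose k : ℂ) * s ^ k) * H.coeff k
      = ((k.factorial : ℂ) * ((n-k).factorial : ℂ) * (n.choose k : ℂ)) * (s ^ k * H.coeff k) := by ring
    _ = (n.factorial : ℂ) * (H.coeff k * s ^ k) := by rw [this]; ring

lemma keyPoly_eval (n : ℕ) (a : ℕ → ℂ) (Q : ℂ[X]) (r : ℂ) :
    (∑ k ∈ Finset.range (n+1), C (a k) * hasseDeriv k Q).eval r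
      = ∑ k ∈ Finset.range (n+1), a k * (taylor r Q).coeff k := by
  rw [eval_finset_sum]
  exact Finset.sum_congr rfl fun k _ => by rw [eval_mul, eval_C, taylor_coeff]

lemma keyPoly_ne_zero (n : ℕ) (a : ℕ → ℂ) (k₀ : ℕ) (hk0 : ∀ k < k₀, a k = 0) (ha : a k₀ ≠ 0)
    (Q : ℂ[X]) (hQ : Q.Monic) (hd : k₀ ≤ Q.natDegree) (hdn : Q.natDegree ≤ n) :
    (∑ k ∈ Finset.range (n+1), C (a k) * hasseDeriv k Q) ≠ 0 := by
  intro h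
  have hc : (∑ k ∈ Finset.range (n+1), C (a k) * hasseDeriv k Q).coeff (Q.natDegree - k₀) = 0 := by
    rw [h, coeff_zero]
  rw [finset_sum_coeff] at hc
  have : ∀ k ∈ Finset.range (n+1),
      (C (a k) * hasseDeriv k Q).coeff (Q.natDegree - k₀)
        = a k * (((Q.natDegree - k₀ + k).choose k : ℂ) * Q.coeff (Q.natDegree - k₀ + k)) := by
    intro k _
    rw [coeff_C_mul, hasseDeriv_coeff]
  rw [Finset.sum_congr rfl this] at hc
  rw [Finset.sum_eq_single k₀] at hc
  · rw [Nat.sub_add_cancel hd] at hc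
    have h1 : Q.coeff Q.natDegree = 1 := hQ.coeff_natDegree
    have h2 : ((Q.natDegree.choose k₀ : ℕ) : ℂ) ≠ 0 :=
      Nat.cast_ne_zero.mpr (Nat.choose_pos hd).ne'
    rw [h1, mul_one] at hc
    exact ha (by
      rcases mul_eq_zero.mp hc with h' | h'
      · exact h'
      · exact absurd h' h2)
  · intro k hk hne
    rcases lt_or_gt_of_ne hne with hlt | hgt
    · rw [hk0 k hlt, zero_mul]
    · have : Q.natDegree < Q.natDegree - k₀ + k := by omega
      rw [coeff_eq_zero_of_natDegree_lt this, mul_zero, mul_zero]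
  · intro hk
    exact absurd (Finset.mem_range.mpr (Nat.lt_succ_of_le (le_trans hd hdn))) hk

end AuxWaring

/-- Every nonzero polynomial `f` of degree `≤ n` is a linear combination of `n` powers
`(1 + tᵢ x)ⁿ` with pairwise distinct `tᵢ` — unless `f` has degree exactly `n` and a root
of multiplicity `n`, in which case `f` is proportional to the `n`-th power of a linear
form. -/
theorem binary_form_waring (n : ℕ) (hn : 1 ≤ n) (f : ℂ[X]) (hf0 : f ≠ 0)
    (hfn : f.natDegree ≤ n) :
    (∃ t : Fin n → ℂ, Function.Injective t ∧
        ∃ c : Fin n → ℂ, f = ∑ i, c i • (1 + C (t i) * X) ^ n) ∨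
      (f.natDegree = n ∧ ∃ (c a : ℂ), f = c • (X - C a) ^ n) := by
  by_cases hxn : ∀ k < n, f.coeff k = 0
  · right
    have hfc : f = C (f.coeff n) * X ^ n := by
      ext k
      rcases lt_trichotomy k n with h | h | h
      · rw [hxn k h, coeff_C_mul, coeff_X_pow, if_neg h.ne, mul_zero]
      · subst h; rw [coeff_C_mul, coeff_X_pow, if_pos rfl, mul_one]
      · rw [coeff_eq_zero_of_natDegree_lt (lt_of_le_of_lt hfn h), coeff_C_mul, coeff_X_pow,
          if_neg h.ne', mul_zero]
    have hcn : f.coeff n ≠ 0 := by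
      intro h
      exact hf0 (by rw [hfc, h, map_zero, zero_mul])
    refine ⟨?_, f.coeff n, 0, ?_⟩
    · rw [hfc, natDegree_C_mul_X_pow n _ hcn]
    · rw [map_zero, sub_zero, smul_eq_C_mul]; exact hfc
  · left
    obtain ⟨m, rfl⟩ : ∃ m, n = m + 1 := ⟨n - 1, (Nat.succ_pred_eq_of_pos hn).symm⟩
    push_neg at hxn
    obtain ⟨j, hjlt, hjne⟩ := hxn
    -- minimal nonzero coefficient index
    have hex : ∃ k, f.coeff k ≠ 0 := ⟨j, hjne⟩
    set k₀ := Nat.find hex with hk₀def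
    have hk₀ : f.coeff k₀ ≠ 0 := Nat.find_spec hex
    have hk₀min : ∀ k < k₀, f.coeff k = 0 := fun k hk => by
      by_contra h; exact absurd (Nat.find_le h) (not_le.mpr hk)
    have hk₀m : k₀ ≤ m := Nat.lt_succ_iff.mp (lt_of_le_of_lt (Nat.find_le hjne) hjlt)
    -- the linear functional coefficients
    set a : ℕ → ℂ := fun k => (k.factorial : ℂ) * (((m+1)-k).factorial : ℂ) * f.coeff k with hadef
    have ha0 : ∀ k < k₀, a k = 0 := fun k hk => by simp [hadef, hk₀min k hk]
    have hak : a k₀ ≠ 0 := by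
      refine mul_ne_zero (mul_ne_zero ?_ ?_) hk₀ <;>
        exact Nat.cast_ne_zero.mpr (Nat.factorial_ne_zero _)
    -- fixed product and shifted products
    set q : ℂ[X] := ∏ i ∈ Finset.range m, (X - C (i : ℂ)) with hqdef
    have hqmonic : q.Monic := monic_prod_of_monic _ _ fun i _ => monic_X_sub_C _
    have hqdeg : q.natDegree = m := by
      rw [hqdef, natDegree_prod_of_monic _ _ fun i _ => monic_X_sub_C _]
      simp only [natDegree_X_sub_C]
      simp
    set P : ℂ[X] := ∑ k ∈ Finset.range (m+1+1), C (a k) * hasseDeriv k q with hPdef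
    have hPne : P ≠ 0 :=
      keyPoly_ne_zero (m+1) a k₀ ha0 hak q hqmonic (hqdeg ▸ hk₀m) (by omega)
    have hPine : ∀ i : ℕ, (∑ k ∈ Finset.range (m+1+1),
        C (a k) * hasseDeriv k ((X - C (i:ℂ)) * q)) ≠ 0 := by
      intro i
      refine keyPoly_ne_zero (m+1) a k₀ ha0 hak _ ((monic_X_sub_C _).mul hqmonic) ?_ ?_
      · rw [(monic_X_sub_C _).natDegree_mul hqmonic, natDegree_X_sub_C, hqdeg]; omega
      · rw [(monic_X_sub_C _).natDegree_mul hqmonic, natDegree_X_sub_C, hqdeg]; omega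
    -- choose r avoiding roots of the finitely many nonzero polynomials
    obtain ⟨r, hr⟩ := Infinite.exists_notMem_finset
      (P.roots.toFinset ∪ (Finset.range m).biUnion
        (fun i => (∑ k ∈ Finset.range (m+1+1),
          C (a k) * hasseDeriv k ((X - C (i:ℂ)) * q)).roots.toFinset))
    have hrP : P.eval r ≠ 0 := by
      intro h
      exact hr (Finset.mem_union_left _ (Multiset.mem_toFinset.mpr
        ((mem_roots hPne).mpr h)))
    have hrPi : ∀ i ∈ Finset.range m, (∑ k ∈ Finset.range (m+1+1),
        C (a k) * hasseDeriv k ((X - C (i:ℂ)) * q)).eval r ≠ 0 := by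
      intro i hi h
      exact hr (Finset.mem_union_right _ (Finset.mem_biUnion.mpr
        ⟨i, hi, Multiset.mem_toFinset.mpr ((mem_roots (hPine i)).mpr h)⟩))
    -- the shifted product
    set qr : ℂ[X] := taylor r q with hqrdef
    have hqrprod : qr = ∏ i ∈ Finset.range m, (X - C ((i:ℂ) - r)) := by
      rw [hqrdef, hqdef]
      rw [show (taylor r) (∏ i ∈ Finset.range m, (X - C (i : ℂ)))
          = taylorAlgHom r (∏ i ∈ Finset.range m, (X - C (i : ℂ))) from rfl, map_prod]
      refine Finset.prod_congr rfl fun i _ => ?_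
      rw [taylorAlgHom_apply, map_sub, taylor_X, taylor_C, C_sub]
      ring
    have hqrmonic : qr.Monic := by
      rw [hqrprod]; exact monic_prod_of_monic _ _ fun i _ => monic_X_sub_C _
    have hqrdeg : qr.natDegree = m := by rw [hqrdef, natDegree_taylor, hqdeg]
    set B : ℂ := ∑ k ∈ Finset.range (m+1+1), a k * qr.coeff k with hBdef
    have hB : B ≠ 0 := by
      rw [hBdef]
      have := keyPoly_eval (m+1) a q r
      rw [← hqrdef] at this
      rw [← this]
      exact hrP
    set A : ℂ := ∑ k ∈ Finset.range (m+1+1), a k * (X * qr).coeff k with hAdef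
    -- key identity : for any w, Φ((X - C w) * qr) = A - w * B
    have hPhi : ∀ w : ℂ, ∑ k ∈ Finset.range (m+1+1), a k * ((X - C w) * qr).coeff k
        = A - w * B := by
      intro w
      rw [hAdef, hBdef, Finset.mul_sum, ← Finset.sum_sub_distrib]
      refine Finset.sum_congr rfl fun k _ => ?_
      rw [sub_mul, coeff_sub, coeff_C_mul]
      ring
    have hPhiI : ∀ i ∈ Finset.range m, A - ((i:ℂ) - r) * B ≠ 0 := by
      intro i hi
      rw [← hPhi ((i:ℂ) - r)]
      have : (X - C ((i:ℂ) - r)) * qr = taylor r ((X - C (i:ℂ)) * q) := by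
        rw [taylor_mul, ← hqrdef]
        congr 1
        rw [taylor_apply, sub_comp, X_comp, C_comp, C_sub]
        ring
      rw [this]
      have := keyPoly_eval (m+1) a ((X - C (i:ℂ)) * q) r
      rw [← this]
      exact hrPi i hi
    set c : ℂ := A / B with hcdef
    have hcB : A - c * B = 0 := by rw [hcdef, div_mul_cancel₀ _ hB]; ring
    have hcne : ∀ i ∈ Finset.range m, c ≠ (i:ℂ) - r := by
      intro i hi h
      exact hPhiI i hi (by rw [← h, hcB])
    set G : ℂ[X] := (X - C c) * qr with hGdef
    have hGmonic : G.Monic := (monic_X_sub_C _).mul hqrmonic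
    have hGdeg : G.natDegree = m + 1 := by
      rw [hGdef, (monic_X_sub_C _).natDegree_mul hqrmonic, natDegree_X_sub_C, hqrdeg]
      omega
    have hPhiG : ∑ k ∈ Finset.range (m+1+1), a k * G.coeff k = 0 := by
      rw [hGdef, hPhi c, hcB]
    -- the nodes
    set t : Fin (m+1) → ℂ := Fin.cons c (fun i : Fin m => ((i:ℕ):ℂ) - r) with htdef
    have ht0 : t 0 = c := rfl
    have htsucc : ∀ i : Fin m, t i.succ = ((i:ℕ):ℂ) - r := fun i => rfl
    have htinj : Function.Injective t := by
      intro i j hij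
      rcases Fin.eq_zero_or_eq_succ i with rfl | ⟨i', rfl⟩ <;>
        rcases Fin.eq_zero_or_eq_succ j with rfl | ⟨j', rfl⟩
      · rfl
      · exact absurd (by rw [← ht0, hij, htsucc]) (hcne j' (Finset.mem_range.mpr j'.isLt))
      · exact absurd (by rw [← ht0, ← hij, htsucc]) (hcne i' (Finset.mem_range.mpr i'.isLt))
      · rw [htsucc, htsucc, sub_left_inj] at hij
        have : (i' : ℕ) = (j' : ℕ) := Nat.cast_injective hij
        rw [Fin.ext_iff]
        simpa using this
    have hGprod : G = ∏ i : Fin (m+1), (X - C (t i)) := by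
      rw [Fin.prod_univ_succ, hGdef, ht0, hqrprod]
      congr 1
      rw [← Fin.prod_univ_eq_prod_range (fun i => X - C ((i:ℂ) - r)) m]
      exact Finset.prod_congr rfl fun i _ => by rw [htsucc]
    have hGroot : ∀ i : Fin (m+1), G.eval (t i) = 0 := by
      intro i
      rw [hGprod, eval_prod]
      exact Finset.prod_eq_zero (Finset.mem_univ i) (by simp)
    -- extra node
    have hGne : G ≠ 0 := hGmonic.ne_zero
    obtain ⟨s₀, hs₀⟩ := Infinite.exists_notMem_finset G.roots.toFinset
    have hGs₀ : G.eval s₀ ≠ 0 := fun h =>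
      hs₀ (Multiset.mem_toFinset.mpr ((mem_roots hGne).mpr h))
    set sv : Fin (m+2) → ℂ := Fin.cons s₀ t with hsvdef
    have hsv0 : sv 0 = s₀ := rfl
    have hsvsucc : ∀ i : Fin (m+1), sv i.succ = t i := fun i => rfl
    have hsvinj : Function.Injective sv := by
      intro i j hij
      rcases Fin.eq_zero_or_eq_succ i with rfl | ⟨i', rfl⟩ <;>
        rcases Fin.eq_zero_or_eq_succ j with rfl | ⟨j', rfl⟩
      · rfl
      · exact absurd (hGroot j') (by rw [← hsvsucc, ← hij, hsv0]; exact hGs₀)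
      · exact absurd (hGroot i') (by rw [← hsvsucc, hij, hsv0]; exact hGs₀)
      · rw [hsvsucc, hsvsucc] at hij
        rw [htinj hij]
    -- Vandermonde representation
    set M : Matrix (Fin (m+2)) (Fin (m+2)) ℂ :=
      Matrix.of (fun k i => (((m+1).choose (k:ℕ) : ℕ) : ℂ) * sv i ^ (k:ℕ)) with hMdef
    have hMeq : M = Matrix.diagonal (fun k : Fin (m+2) => (((m+1).choose (k:ℕ) : ℕ) : ℂ))
        * (Matrix.vandermonde sv).transpose := by
      ext k i
      rw [Matrix.diagonal_mul, Matrix.transpose_apply, Matrix.vandermonde_apply]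
      rfl
    have hMdet : IsUnit M.det := by
      rw [hMeq, Matrix.det_mul, Matrix.det_diagonal, Matrix.det_transpose,
        Matrix.det_vandermonde]
      refine (mul_ne_zero ?_ ?_).isUnit
      · refine Finset.prod_ne_zero_iff.mpr fun k _ => ?_
        exact Nat.cast_ne_zero.mpr (Nat.choose_pos (Nat.lt_succ_iff.mp k.isLt)).ne'
      · refine Finset.prod_ne_zero_iff.mpr fun i _ => ?_
        refine Finset.prod_ne_zero_iff.mpr fun j hj => ?_
        exact sub_ne_zero.mpr fun h => (Finset.mem_Ioi.mp hj).ne' (hsvinj h)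
    set d : Fin (m+2) → ℂ := M⁻¹.mulVec (fun k : Fin (m+2) => f.coeff (k:ℕ)) with hddef
    have hMv : M.mulVec d = fun k : Fin (m+2) => f.coeff (k:ℕ) := by
      rw [hddef, Matrix.mulVec_mulVec, Matrix.mul_nonsing_inv _ hMdet, Matrix.one_mulVec]
    have hrepr : f = ∑ i : Fin (m+2), d i • (1 + C (sv i) * X) ^ (m+1) := by
      ext k
      rw [finset_sum_coeff]
      have hco : ∀ i : Fin (m+2), (d i • (1 + C (sv i) * X) ^ (m+1)).coeff k
          = d i * ((((m+1).choose k : ℕ) : ℂ) * sv i ^ k) := by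
        intro i
        rw [coeff_smul, coeff_one_add_C_mul_X_pow, smul_eq_mul]
      rw [Finset.sum_congr rfl fun i _ => hco i]
      by_cases hk : k < m + 2
      · have := congrFun hMv ⟨k, hk⟩
        rw [Matrix.mulVec, dotProduct] at this
        rw [← this]
        refine Finset.sum_congr rfl fun i _ => ?_
        rw [hMdef]
        simp only [Matrix.of_apply]
        ring
      · rw [coeff_eq_zero_of_natDegree_lt (lt_of_le_of_lt hfn (by omega))]
        have hz : ∀ i : Fin (m+2), d i * ((((m+1).choose k : ℕ) : ℂ) * sv i ^ k) = 0 := by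
          intro i
          rw [Nat.choose_eq_zero_of_lt (by omega), Nat.cast_zero, zero_mul, mul_zero]
        rw [Finset.sum_congr rfl fun i _ => hz i, Finset.sum_const, smul_zero]
    have key : (0:ℂ) = ∑ i : Fin (m+2), d i * (((m+1).factorial : ℂ) * G.eval (sv i)) := by
      rw [← hPhiG]
      have hstep : ∀ k ∈ Finset.range (m+1+1), a k * G.coeff k
          = ∑ i : Fin (m+2), d i * (((k.factorial : ℂ) * (((m+1)-k).factorial : ℂ))
              * ((1 + C (sv i) * X) ^ (m+1)).coeff k * G.coeff k) := by
        intro k _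
        have hfk : f.coeff k = ∑ i : Fin (m+2), d i * ((1 + C (sv i) * X) ^ (m+1)).coeff k := by
          conv_lhs => rw [hrepr]
          rw [finset_sum_coeff]
          exact Finset.sum_congr rfl fun i _ => by rw [coeff_smul, smul_eq_mul]
        have ha : a k = (k.factorial : ℂ) * (((m+1)-k).factorial : ℂ) * f.coeff k := rfl
        rw [ha, hfk, Finset.mul_sum, Finset.sum_mul]
        refine Finset.sum_congr rfl fun i _ => by ring
      rw [Finset.sum_congr rfl hstep, Finset.sum_comm]
      refine Finset.sum_congr rfl fun i _ => ?_
      rw [← Finset.mul_sum, lambda_eval (m+1) G (le_of_eq hGdeg) (sv i)]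
    rw [Fin.sum_univ_succ] at key
    have hz : ∀ i : Fin (m+1), d i.succ * (((m+1).factorial : ℂ) * G.eval (sv i.succ)) = 0 := by
      intro i; rw [hsvsucc, hGroot, mul_zero, mul_zero]
    rw [Finset.sum_congr rfl (fun i _ => hz i), Finset.sum_const, smul_zero, add_zero, hsv0] at key
    have hd0 : d 0 = 0 := by
      have hfact : ((m+1).factorial : ℂ) ≠ 0 := Nat.cast_ne_zero.mpr (Nat.factorial_ne_zero _)
      rcases mul_eq_zero.mp key.symm with h | h
      · exact h
      · exact absurd h (mul_ne_zero hfact hGs₀)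
    refine ⟨t, htinj, fun i => d i.succ, ?_⟩
    rw [hrepr, Fin.sum_univ_succ, hd0, zero_smul, zero_add]
    exact Finset.sum_congr rfl fun i _ => by rw [hsvsucc]
end

section
/- Let n ≥ 2 and F(x,y) = x^(n−1) y. The Waring rank of F is exactly n: F is a linear combination of n n-th powers of linear forms, but not of n−1 such powers. -/
open MvPolynomial

namespace WaringAux

noncomputable def Dop (a' b' : ℂ) :
    MvPolynomial (Fin 2) ℂ →ₗ[ℂ] MvPolynomial (Fin 2) ℂ :=
  b' • (pderiv 0 : Derivation ℂ _ _).toLinearMap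
    - a' • (pderiv 1 : Derivation ℂ _ _).toLinearMap

lemma Dop_apply (a' b' : ℂ) (p : MvPolynomial (Fin 2) ℂ) :
    Dop a' b' p = C b' * pderiv 0 p - C a' * pderiv 1 p := by
  simp [Dop, smul_eq_C_mul]

lemma Dop_linpow (a' b' a b : ℂ) (m : ℕ) :
    Dop a' b' ((C a * X 0 + C b * X 1) ^ m)
      = C ((m : ℂ) * (a * b' - a' * b)) * (C a * X 0 + C b * X 1) ^ (m - 1) := by
  rw [Dop_apply]
  have h0 : pderiv (0 : Fin 2) (C a * X 0 + C b * X 1) = C a := by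
    simp [pderiv_C_mul]
  have h1 : pderiv (1 : Fin 2) (C a * X 0 + C b * X 1) = C b := by
    simp [pderiv_C_mul]
  rw [pderiv_pow, pderiv_pow, h0, h1]
  simp only [map_sub, map_mul, map_natCast]
  ring

end WaringAux

namespace WaringAux

lemma Dop_lhs (a' b' κ μ : ℂ) (m : ℕ) (_hm : 2 ≤ m) :
    Dop a' b' (C κ * X 0 ^ (m - 1) * X 1 + C μ * X 0 ^ m)
      = C (κ * ((m - 1 : ℕ) : ℂ) * b') * X 0 ^ (m - 1 - 1) * X 1
          + C (μ * (m : ℂ) * b' - κ * a') * X 0 ^ (m - 1) := by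
  rw [Dop_apply]
  simp only [map_add, pderiv_C_mul, pderiv_mul, pderiv_pow, pderiv_X_self,
    pderiv_X_of_ne (show (0:Fin 2) ≠ 1 by decide), pderiv_X_of_ne (show (1:Fin 2) ≠ 0 by decide), pderiv_C,
    mul_one, mul_zero, add_zero, zero_add, map_sub, map_mul, map_natCast]
  ring

lemma base (m : ℕ) (κ μ : ℂ) (_hm : 0 < m) (hκ : κ ≠ 0) :
    (C κ * X 0 ^ (m - 1) * X 1 + C μ * X 0 ^ m : MvPolynomial (Fin 2) ℂ) ≠ 0 := by
  intro H
  have h1 : (C κ * X 0 ^ (m - 1) * X 1 : MvPolynomial (Fin 2) ℂ)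
      = monomial (Finsupp.single 0 (m - 1) + Finsupp.single 1 1) κ := by
    rw [X_pow_eq_monomial, C_mul_monomial, ← pow_one (X 1 : MvPolynomial (Fin 2) ℂ),
      X_pow_eq_monomial, monomial_mul, mul_one, mul_one]
  have h2 : (C μ * X 0 ^ m : MvPolynomial (Fin 2) ℂ) = monomial (Finsupp.single 0 m) μ := by
    rw [X_pow_eq_monomial, C_mul_monomial, mul_one]
  rw [h1, h2] at H
  have := congrArg (coeff (Finsupp.single 0 (m - 1) + Finsupp.single 1 1)) H
  rw [coeff_add, coeff_monomial, coeff_monomial, if_pos rfl, if_neg, add_zero, coeff_zero] at this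
  · exact hκ this
  · intro h
    have := DFunLike.congr_fun h 1
    simp [Finsupp.single_apply] at this

lemma aux (r : ℕ) : ∀ (m : ℕ) (κ μ : ℂ), κ ≠ 0 → r < m → ∀ (a b c : Fin r → ℂ),
    (C κ * X 0 ^ (m - 1) * X 1 + C μ * X 0 ^ m : MvPolynomial (Fin 2) ℂ) ≠
      ∑ i, c i • (C (a i) * X 0 + C (b i) * X 1) ^ m := by
  induction r with
  | zero =>
    intro m κ μ hκ hm a b c H
    rw [Finset.univ_eq_empty, Finset.sum_empty] at H
    exact base m κ μ hm hκ H
  | succ r ih =>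
    intro m κ μ hκ hm a b c H
    rcases eq_or_ne (b (Fin.last r)) 0 with hb | hb
    · refine ih m κ (μ - c (Fin.last r) * a (Fin.last r) ^ m) hκ (by omega)
        (fun i => a i.castSucc) (fun i => b i.castSucc) (fun i => c i.castSucc) ?_
      rw [Fin.sum_univ_castSucc] at H
      simp only [hb, map_zero, zero_mul, add_zero, smul_eq_C_mul] at H ⊢
      rw [map_sub, map_mul, map_pow]
      linear_combination H
    · have H2 := congrArg (Dop (a (Fin.last r)) (b (Fin.last r))) H
      rw [map_sum, Dop_lhs _ _ _ _ m (by omega)] at H2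
      simp only [map_smul, Dop_linpow] at H2
      rw [Fin.sum_univ_castSucc] at H2
      have hz : ((m : ℂ) * (a (Fin.last r) * b (Fin.last r)
          - a (Fin.last r) * b (Fin.last r))) = 0 := by ring
      rw [hz, map_zero, zero_mul, smul_zero, add_zero] at H2
      have hm1 : ((m - 1 : ℕ) : ℂ) ≠ 0 := by
        rw [Nat.cast_ne_zero]; omega
      refine ih (m - 1) (κ * ((m - 1 : ℕ) : ℂ) * b (Fin.last r))
        (μ * (m : ℂ) * b (Fin.last r) - κ * a (Fin.last r))
        (by exact mul_ne_zero (mul_ne_zero hκ hm1) hb) (by omega)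
        (fun i => a i.castSucc) (fun i => b i.castSucc)
        (fun i => c i.castSucc * ((m : ℂ) * (a i.castSucc * b (Fin.last r)
          - a (Fin.last r) * b i.castSucc))) ?_
      rw [H2]
      refine Finset.sum_congr rfl fun i _ => ?_
      simp only [smul_eq_C_mul, map_sub, map_mul, map_natCast]
      ring

end WaringAux

namespace WaringAux

lemma mem_part (n : ℕ) (hn : 2 ≤ n) : ∃ (a b c : Fin n → ℂ),
    (X 0 ^ (n - 1) * X 1 : MvPolynomial (Fin 2) ℂ) =
      ∑ i, c i • (C (a i) * X 0 + C (b i) * X 1) ^ n := by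
  have hn0 : (n : ℂ) ≠ 0 := Nat.cast_ne_zero.mpr (by omega)
  set ω := Complex.exp (2 * Real.pi * Complex.I / n) with hω
  have hprim : IsPrimitiveRoot ω n := Complex.isPrimitiveRoot_exp n (by omega)
  set c : Fin n → ℂ := fun i => ω ^ ((i : ℕ) * (n - 1)) / (n ^ 2 : ℂ) with hc
  refine ⟨fun _ => 1, fun i => ω ^ (i : ℕ), c, ?_⟩
  have hsum : ∀ k, k ≤ n → (∑ i : Fin n, c i * ω ^ ((i : ℕ) * (n - k)))
      = if k = n - 1 then 1 / (n : ℂ) else 0 := by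
    intro k hk
    have hexp : ∀ i : Fin n, c i * ω ^ ((i : ℕ) * (n - k))
        = (ω ^ (2 * n - 1 - k)) ^ (i : ℕ) / (n ^ 2 : ℂ) := by
      intro i
      rw [hc]
      rw [div_mul_eq_mul_div, ← pow_add, ← pow_mul]
      congr 2
      rw [← Nat.mul_add, Nat.mul_comm]
      congr 1
      omega
    rw [Finset.sum_congr rfl fun i _ => hexp i, ← Finset.sum_div,
      Fin.sum_univ_eq_sum_range (fun i => (ω ^ (2 * n - 1 - k)) ^ i) n]
    by_cases hk1 : k = n - 1
    · subst hk1
      have h2 : 2 * n - 1 - (n - 1) = n := by omega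
      rw [h2, hprim.pow_eq_one, if_pos rfl]
      simp only [one_pow, Finset.sum_const, Finset.card_range, nsmul_eq_mul, mul_one]
      rw [sq]
      field_simp
    · have hζ : ω ^ (2 * n - 1 - k) ≠ 1 := by
        intro hone
        rw [hprim.pow_eq_one_iff_dvd] at hone
        obtain ⟨t, ht⟩ := hone
        rcases t with _ | _ | t
        · omega
        · omega
        · have : n * (t + 1 + 1) = n * t + 2 * n := by ring
          omega
      rw [geom_sum_eq hζ n, ← pow_mul, mul_comm (2 * n - 1 - k) n, pow_mul,
        hprim.pow_eq_one, one_pow, sub_self, zero_div, zero_div, if_neg hk1]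
  have term_eq : ∀ i : Fin n, C (c i) * (X 0 + C (ω ^ (i : ℕ)) * X 1) ^ n
      = ∑ k ∈ Finset.range (n + 1), C (c i * ω ^ ((i : ℕ) * (n - k)))
          * (X 0 ^ k * X 1 ^ (n - k) * (n.choose k : MvPolynomial (Fin 2) ℂ)) := by
    intro i
    rw [add_pow, Finset.mul_sum]
    refine Finset.sum_congr rfl fun k hk => ?_
    rw [mul_pow, ← map_pow, ← pow_mul, map_mul]
    ring
  have inner : ∀ k ∈ Finset.range (n + 1),
      (∑ i : Fin n, C (c i * ω ^ ((i : ℕ) * (n - k)))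
          * (X 0 ^ k * X 1 ^ (n - k) * (n.choose k : MvPolynomial (Fin 2) ℂ)))
        = if k = n - 1 then C (1 / (n : ℂ))
            * (X 0 ^ k * X 1 ^ (n - k) * (n.choose k : MvPolynomial (Fin 2) ℂ)) else 0 := by
    intro k hk
    rw [← Finset.sum_mul, ← map_sum, hsum k (by simp at hk; omega)]
    split_ifs with h
    · rfl
    · rw [map_zero, zero_mul]
  have main : (∑ i : Fin n, C (c i) * (X 0 + C (ω ^ (i : ℕ)) * X 1) ^ n
      : MvPolynomial (Fin 2) ℂ) = X 0 ^ (n - 1) * X 1 := by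
    rw [Finset.sum_congr rfl fun i _ => term_eq i, Finset.sum_comm,
      Finset.sum_congr rfl inner, Finset.sum_ite_eq' (Finset.range (n + 1)) (n - 1),
      if_pos (Finset.mem_range.mpr (by omega))]
    have h1 : n - (n - 1) = 1 := by omega
    have h2 : n.choose (n - 1) = n :=
      (Nat.choose_symm (by omega : 1 ≤ n)).trans (Nat.choose_one_right n)
    rw [h1, h2, pow_one]
    rw [show ((n : ℕ) : MvPolynomial (Fin 2) ℂ) = C (n : ℂ) by rw [map_natCast]]
    rw [show (C (1 / (n : ℂ)) : MvPolynomial (Fin 2) ℂ) * (X 0 ^ (n - 1) * X 1 * C (n : ℂ))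
      = C (1 / (n : ℂ) * n) * (X 0 ^ (n - 1) * X 1) by rw [map_mul]; ring]
    rw [one_div, inv_mul_cancel₀ hn0, map_one, one_mul]
  simp only [smul_eq_C_mul, map_one, one_mul]
  exact main.symm

end WaringAux

/-- The Waring rank of the binary form `x^(n-1) y` is exactly `n`: `n` is the least
`r` such that `x^(n-1) y` is a linear combination of `r` `n`-th powers of linear
forms. -/
theorem waring_rank_xpow_y (n : ℕ) (hn : 2 ≤ n) :
    IsLeast {r : ℕ | ∃ (a b c : Fin r → ℂ),
        (X 0 ^ (n - 1) * X 1 : MvPolynomial (Fin 2) ℂ) =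
          ∑ i, c i • (C (a i) * X 0 + C (b i) * X 1) ^ n} n := by
  constructor
  · exact WaringAux.mem_part n hn
  · rintro r ⟨a, b, c, H⟩
    by_contra h
    push_neg at h
    refine WaringAux.aux r n 1 0 one_ne_zero h a b c ?_
    rw [map_one, one_mul, map_zero, zero_mul, add_zero]
    exact H
end
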